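/- The variance of the q-Bernoulli distribution equals [n]_q · p · (1 - p); i.e., the second moment minus the square of the mean of the distribution assigning probability [n choose κ]_q p^κ (1−·p)^{n-κ} to the value [κ]_q equals [n]_q p(1-p). -/

import Mathlib

/-- The `q`-analog `[n]_q = 1 + q + ⋯ + q^(n-1)` of a natural number. -/
def qNum {R : Type*} [CommRing R] (q : R) (n : ℕ) : R := ∑ i ∈ Finset.range n, q ^ i

/-- The `q`-factorial `[n]! = [1][2]⋯[n]`. -/
def qFact {R : Type*} [CommRing R] (q : R) (n : ℕ) : R := ∏ i ∈ Finset.range n, qNum q (i + 1)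

/-- The Gaussian (`q`-)binomial coefficient, via the `q`-Pascal recursion. -/
def qBinom {R : Type*} [CommRing R] (q : R) : ℕ → ℕ → R
  | _, 0 => 1
  | 0, _ + 1 => 0
  | n + 1, k + 1 => qBinom q n k + q ^ (k + 1) * qBinom q n (k + 1)

/-- The `q`-shifted product `(1 −· p)^m = ∏_{i=0}^{m-1} (1 - p q^i)`. -/
def qProdSub {R : Type*} [CommRing R] (q p : R) (m : ℕ) : R :=
  ∏ i ∈ Finset.range m, (1 - p * q ^ i)

/-- The `q`-shifted power `(x +· y)^m = ∏_{i=0}^{m-1} (x + q^i y)`. -/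
def qProdAdd {R : Type*} [CommRing R] (q x y : R) (m : ℕ) : R :=
  ∏ i ∈ Finset.range m, (x + q ^ i * y)

/-!
Write `w n κ = [n choose κ] p^κ (1 −· p)^(n-κ)` for the weights. The `q`-Pascal rule splits
`w_p (n+1)` into `p · w_p n` (shifted by one) plus `(1 - p) · w_{qp} n`, so the weights sum to `1`
by induction on `n`, for every `p` at once. The absorption identity
`[κ+1] [n+1 choose κ+1] = [n+1] [n choose κ]` turns `[κ+1] · w (n+1) (κ+1)` into
`[n+1] p · w n κ`; hence the mean is `[n] p` and, since `[κ+1] = 1 + q [κ]`, the second moment of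
`w (n+1)` is `[n+1] p (1 + q [n] p)`. The variance then collapses by `[n+1] = 1 + q [n]`.
-/

open Finset

section CommRing

variable {R : Type*} [CommRing R] (q p : R)

@[simp]
theorem qNum_zero : qNum q 0 = 0 := by simp [qNum]

theorem qNum_succ (n : ℕ) : qNum q (n + 1) = 1 + q * qNum q n := by
  simp [qNum, sum_range_succ', mul_sum, pow_succ, mul_comm, add_comm]

@[simp]
theorem qBinom_zero_right (n : ℕ) : qBinom q n 0 = 1 := by
  cases n <;> rfl

theorem qBinom_succ_succ (n k : ℕ) :
    qBinom q (n + 1) (k + 1) = qBinom q n k + q ^ (k + 1) * qBinom q n (k + 1) := rfl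

theorem qBinom_eq_zero_of_lt : ∀ {n k : ℕ}, n < k → qBinom q n k = 0
  | 0, _ + 1, _ => rfl
  | n + 1, k + 1, h => by
    rw [qBinom_succ_succ, qBinom_eq_zero_of_lt (by omega), qBinom_eq_zero_of_lt (by omega),
      mul_zero, add_zero]

theorem qNum_succ_mul_qBinom_succ_succ :
    ∀ n k : ℕ, qNum q (k + 1) * qBinom q (n + 1) (k + 1) = qNum q (n + 1) * qBinom q n k
  | 0, 0 => by simp [qBinom, qNum]
  | 0, k + 1 => by
    rw [qBinom_succ_succ, qBinom_eq_zero_of_lt q (by omega), qBinom_eq_zero_of_lt q (by omega)]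
    ring
  | n + 1, 0 => by
    have ih := qNum_succ_mul_qBinom_succ_succ n 0
    simp only [qBinom_succ_succ, qBinom_zero_right, qNum_succ, qNum_zero] at ih ⊢
    linear_combination q * ih
  | n + 1, k + 1 => by
    have ih₁ := qNum_succ_mul_qBinom_succ_succ n k
    have ih₂ := qNum_succ_mul_qBinom_succ_succ n (k + 1)
    simp only [qBinom_succ_succ, qNum_succ] at ih₁ ih₂ ⊢
    linear_combination q * ih₁ + q ^ (k + 2) * ih₂

theorem qProdSub_succ (m : ℕ) : qProdSub q p (m + 1) = (1 - p) * qProdSub q (q * p) m := by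
  simp only [qProdSub, prod_range_succ', pow_zero, mul_one, pow_succ]
  rw [mul_comm]
  congr 1
  exact prod_congr rfl fun i _ => by ring

def qBernoulliWeight (n κ : ℕ) : R := qBinom q n κ * p ^ κ * qProdSub q p (n - κ)

theorem qBernoulliWeight_eq_zero_of_lt {n κ : ℕ} (h : n < κ) : qBernoulliWeight q p n κ = 0 := by
  rw [qBernoulliWeight, qBinom_eq_zero_of_lt q h, zero_mul, zero_mul]

theorem qBernoulliWeight_succ_zero (n : ℕ) :
    qBernoulliWeight q p (n + 1) 0 = (1 - p) * qBernoulliWeight q (q * p) n 0 := by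
  simp [qBernoulliWeight, qProdSub_succ]

theorem qBernoulliWeight_succ_succ (n k : ℕ) :
    qBernoulliWeight q p (n + 1) (k + 1) =
      p * qBernoulliWeight q p n k + (1 - p) * qBernoulliWeight q (q * p) n (k + 1) := by
  rcases Nat.lt_or_ge k n with hk | hk
  · obtain ⟨m, rfl⟩ : ∃ m, n = k + 1 + m := ⟨n - (k + 1), by omega⟩
    simp only [qBernoulliWeight, qBinom_succ_succ, show k + 1 + m - k = m + 1 by omega,
      show k + 1 + m - (k + 1) = m by omega, show k + 1 + m + 1 - (k + 1) = m + 1 by omega,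
      qProdSub_succ]
    ring
  · rw [qBernoulliWeight_eq_zero_of_lt q (q * p) (by omega : n < k + 1), qBernoulliWeight,
      qBernoulliWeight, qBinom_succ_succ, qBinom_eq_zero_of_lt q (by omega : n < k + 1),
      Nat.add_sub_add_right]
    ring

theorem sum_qBernoulliWeight :
    ∀ (n : ℕ) (p : R), ∑ κ ∈ range (n + 1), qBernoulliWeight q p n κ = 1
  | 0, p => by simp [qBernoulliWeight, qProdSub]
  | n + 1, p => by
    have hqp : ∑ κ ∈ range (n + 2), qBernoulliWeight q (q * p) n κ = 1 := by
      rw [sum_range_succ, qBernoulliWeight_eq_zero_of_lt q _ (by omega), add_zero,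
        sum_qBernoulliWeight n]
    rw [sum_range_succ'] at hqp ⊢
    simp only [qBernoulliWeight_succ_succ, sum_add_distrib, ← mul_sum, sum_qBernoulliWeight n,
      qBernoulliWeight_succ_zero]
    linear_combination (1 - p) * hqp

theorem qNum_succ_mul_qBernoulliWeight_succ_succ (n k : ℕ) :
    qNum q (k + 1) * qBernoulliWeight q p (n + 1) (k + 1) =
      qNum q (n + 1) * p * qBernoulliWeight q p n k := by
  rw [qBernoulliWeight, qBernoulliWeight, Nat.succ_sub_succ]
  linear_combination p ^ (k + 1) * qProdSub q p (n - k) * qNum_succ_mul_qBinom_succ_succ q n k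

theorem sum_qNum_mul_qBernoulliWeight (n : ℕ) (g : ℕ → R) :
    ∑ κ ∈ range (n + 2), qNum q κ * g κ * qBernoulliWeight q p (n + 1) κ =
      qNum q (n + 1) * p * ∑ k ∈ range (n + 1), g (k + 1) * qBernoulliWeight q p n k := by
  rw [sum_range_succ', qNum_zero, zero_mul, zero_mul, add_zero, mul_sum]
  refine sum_congr rfl fun k _ => ?_
  linear_combination g (k + 1) * qNum_succ_mul_qBernoulliWeight_succ_succ q p n k

theorem qBernoulli_mean (n : ℕ) :
    ∑ κ ∈ range (n + 1), qNum q κ * qBernoulliWeight q p n κ = qNum q n * p := by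
  cases n with
  | zero => simp
  | succ n =>
    simpa [sum_qBernoulliWeight] using sum_qNum_mul_qBernoulliWeight q p n fun _ => 1

theorem qBernoulli_secondMoment (n : ℕ) :
    ∑ κ ∈ range (n + 2), qNum q κ ^ 2 * qBernoulliWeight q p (n + 1) κ =
      qNum q (n + 1) * p * (1 + q * (qNum q n * p)) := by
  have h := sum_qNum_mul_qBernoulliWeight q p n (qNum q)
  simp only [← sq] at h
  rw [h]
  simp only [qNum_succ q, add_mul, one_mul, mul_assoc, sum_add_distrib, ← mul_sum,
    sum_qBernoulliWeight, qBernoulli_mean]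

end CommRing

theorem qBernoulli_variance_general {F : Type*} [Field F] (q p : F)
    (n : ℕ) :
    (∑ κ ∈ Finset.range (n + 1),
        (qNum q κ) ^ 2 * (qBinom q n κ * p ^ κ * qProdSub q p (n - κ))) -
      (∑ κ ∈ Finset.range (n + 1),
        qNum q κ * (qBinom q n κ * p ^ κ * qProdSub q p (n - κ))) ^ 2 =
      qNum q n * p * (1 - p) := by
  cases n with
  | zero => simp
  | succ n =>
    have hsecond := qBernoulli_secondMoment q p n
    have hmean := qBernoulli_mean q p (n + 1)
    simp only [qBernoulliWeight] at hsecond hmean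
    rw [hsecond, hmean, qNum_succ q n]
    ring

/-- Variance of the q-Bernoulli distribution (2.20): second moment minus the square of the
mean equals `[n] p (1 - p)`. -/
theorem qBernoulli_variance {F : Type*} [Field F] (q p : F) (hq : q ≠ 1)
    (n : ℕ) (hn : 1 ≤ n) :
    (∑ κ ∈ Finset.range (n + 1),
        (qNum q κ) ^ 2 * (qBinom q n κ * p ^ κ * qProdSub q p (n - κ))) -
      (∑ κ ∈ Finset.range (n + 1),
        qNum q κ * (qBinom q n κ * p ^ κ * qProdSub q p (n - κ))) ^ 2 =
      qNum q n * p * (1 - p) :=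
  qBernoulli_variance_general q p n
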